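/- Kernel-trick identity for the three-pass regression filter forecast. Let φX ∈ ℝ^{T×M}, Z ∈ ℝ^{T×L}, y ∈ ℝ^T be real, let J_T = I_T − (1/T)ι_T ι_T' be the demeaning matrix, set S_{UV} = U'J_T V for conformable matrices U, V, and let K = φX·φX' ∈ ℝ^{T×T} be the Gram matrix. Assume the L×L matrix S_{φX,Z}' S_{φX,φX} S_{φX,Z} = Z'J_T K J_T K J_T Z is invertible. Then ι_T ȳ + J_T φX S_{φX,Z} (S_{φX,Z}' S_{φX,φX} S_{φX,Z})⁻¹ S_{φX,Z}' S_{φX,y} = ι_T ȳ + J_T K J_T Z (Z'J_T K J_T K J_T Z)⁻¹ Z'J_T K J_T y, where ȳ is the sample mean of y; in particular, the three-pass regression filter forecast computed from φX depends on φX only through the Gram matrix K = φX·φX'. -/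

import Mathlib

open Matrix

noncomputable section

/-- The `T × T` demeaning matrix `J_T = I_T - (1/T) ι_T ι_T'`. -/
def Jmat (T : ℕ) : Matrix (Fin T) (Fin T) ℝ :=
  1 - (T : ℝ)⁻¹ • Matrix.of (fun _ _ => (1 : ℝ))

theorem transpose_Jmat (T : ℕ) : (Jmat T)ᵀ = Jmat T := by
  ext i j
  simp [Jmat, one_apply, eq_comm]

/-- Since `Jᵀ = J`, `(Xᵀ J Z)ᵀ = Zᵀ J X`; after that both sides, the inverted matrices included,
are the same product up to reassociation. -/
theorem mul_inv_mul_eq_gram_of_transpose_eq {R m n l : Type*} [CommRing R]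
    [Fintype m] [DecidableEq m] [Fintype n] [Fintype l] [DecidableEq l]
    (J : Matrix m m R) (hJ : Jᵀ = J) (X : Matrix m n R) (Z : Matrix m l R) :
    J * X * (Xᵀ * J * Z) * ((Xᵀ * J * Z)ᵀ * (Xᵀ * J * X) * (Xᵀ * J * Z))⁻¹ *
        (Xᵀ * J * Z)ᵀ * (Xᵀ * J) =
      J * (X * Xᵀ) * J * Z * (Zᵀ * J * (X * Xᵀ) * J * (X * Xᵀ) * J * Z)⁻¹ *
        (Zᵀ * J * (X * Xᵀ) * J) := by
  simp only [transpose_mul, hJ, transpose_transpose, Matrix.mul_assoc]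

theorem kernel_trick_forecast_general {T M L : ℕ}
    (phiX : Matrix (Fin T) (Fin M) ℝ) (Z : Matrix (Fin T) (Fin L) ℝ)
    (y : Fin T → ℝ) :
    (fun _ : Fin T => (T : ℝ)⁻¹ * ∑ t : Fin T, y t) +
        (Jmat T * phiX * (phiXᵀ * Jmat T * Z) *
          ((phiXᵀ * Jmat T * Z)ᵀ * (phiXᵀ * Jmat T * phiX) * (phiXᵀ * Jmat T * Z))⁻¹ *
          (phiXᵀ * Jmat T * Z)ᵀ * (phiXᵀ * Jmat T)) *ᵥ y =
      (fun _ : Fin T => (T : ℝ)⁻¹ * ∑ t : Fin T, y t) +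
        (Jmat T * (phiX * phiXᵀ) * Jmat T * Z *
          (Zᵀ * Jmat T * (phiX * phiXᵀ) * Jmat T * (phiX * phiXᵀ) * Jmat T * Z)⁻¹ *
          (Zᵀ * Jmat T * (phiX * phiXᵀ) * Jmat T)) *ᵥ y := by
  rw [mul_inv_mul_eq_gram_of_transpose_eq _ (transpose_Jmat T)]

/-- **Kernel-trick identity for the three-pass regression filter forecast.**
With `S_{UV} = U'J_T V` and `K = φX φX'` the Gram matrix, if
`S_{φX,Z}' S_{φX,φX} S_{φX,Z} = Z'J_T K J_T K J_T Z` is invertible, then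
`ι_T ȳ + J_T φX S_{φX,Z} (S_{φX,Z}' S_{φX,φX} S_{φX,Z})⁻¹ S_{φX,Z}' S_{φX,y}
  = ι_T ȳ + J_T K J_T Z (Z'J_T K J_T K J_T Z)⁻¹ Z'J_T K J_T y`:
the 3PRF forecast depends on `φX` only through the Gram matrix. -/
theorem kernel_trick_forecast {T M L : ℕ}
    (phiX : Matrix (Fin T) (Fin M) ℝ) (Z : Matrix (Fin T) (Fin L) ℝ)
    (y : Fin T → ℝ)
    (hinv : IsUnit ((phiXᵀ * Jmat T * Z)ᵀ * (phiXᵀ * Jmat T * phiX) *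
      (phiXᵀ * Jmat T * Z)).det) :
    (fun _ : Fin T => (T : ℝ)⁻¹ * ∑ t : Fin T, y t) +
        (Jmat T * phiX * (phiXᵀ * Jmat T * Z) *
          ((phiXᵀ * Jmat T * Z)ᵀ * (phiXᵀ * Jmat T * phiX) * (phiXᵀ * Jmat T * Z))⁻¹ *
          (phiXᵀ * Jmat T * Z)ᵀ * (phiXᵀ * Jmat T)) *ᵥ y =
      (fun _ : Fin T => (T : ℝ)⁻¹ * ∑ t : Fin T, y t) +
        (Jmat T * (phiX * phiXᵀ) * Jmat T * Z *
          (Zᵀ * Jmat T * (phiX * phiXᵀ) * Jmat T * (phiX * phiXᵀ) * Jmat T * Z)⁻¹ *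
          (Zᵀ * Jmat T * (phiX * phiXᵀ) * Jmat T)) *ᵥ y :=
  kernel_trick_forecast_general phiX Z y
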